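/- arXiv:math/0611428 — 4 statements merged into one kernel-verified Lean document; each statement's English description precedes it below -/
import Mathlib

section
/- Let g ≥ 2, h ≥ 0, n ≥ 1 and k ≥ 1 be integers, and let ν₁ ≤ ν₂ ≤ … ≤ ν_k be integers with each ν_i ≥ 2, satisfying the Hurwitz relation 2g − 2 = n·(2h − 2 + ∑_{i=1}^{k}(1 − 1/ν_i)) as an equality of rational numbers. Then n/ν_k ≤ 3(g − 1), unless h = 0 and the tuple (ν₁,…,ν_k) is one of (2,2,2,3), (2,3,7), (2,3,8), (2,3,9), (2,4,5), (2,4,6), (2,5,5), (3,3,4). -/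
lemma key3 (a b c : ℕ) (ha : 2 ≤ a) (hab : a ≤ b) (hbc : b ≤ c)
    (hpos : a*b + b*c + a*c < a*b*c) :
    5*(a*b) + 3*(b*c) + 3*(a*c) ≤ 3*(a*b*c) ∨
      (a = 2 ∧ b = 3 ∧ c = 7) ∨ (a = 2 ∧ b = 3 ∧ c = 8) ∨ (a = 2 ∧ b = 3 ∧ c = 9) ∨
      (a = 2 ∧ b = 4 ∧ c = 5) ∨ (a = 2 ∧ b = 4 ∧ c = 6) ∨ (a = 2 ∧ b = 5 ∧ c = 5) ∨
      (a = 3 ∧ b = 3 ∧ c = 4) := by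
  rcases Nat.lt_or_ge a 4 with ha4 | ha4
  · rcases Nat.lt_or_ge b 6 with hb6 | hb6
    · interval_cases a <;> interval_cases b <;> omega
    · left
      interval_cases a <;> nlinarith [Nat.mul_le_mul_right c hb6, Nat.mul_le_mul_left b hbc,
        Nat.mul_le_mul_left c hbc, hbc.trans_lt' (by omega : 0 < b)]
  · left
    have h1 : 4*(b*c) ≤ a*(b*c) := Nat.mul_le_mul_right _ ha4
    have h2 : 4*(a*c) ≤ b*(a*c) := Nat.mul_le_mul_right _ (by omega)
    have h3 : 4*(a*b) ≤ c*(a*b) := Nat.mul_le_mul_right _ (by omega)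
    nlinarith [h1, h2, h3]

lemma key4 (a b c d : ℕ) (ha : 2 ≤ a) (hab : a ≤ b) (hbc : b ≤ c) (hcd : c ≤ d)
    (hpos : b*c*d + a*c*d + a*b*d + a*b*c < 2*(a*b*c*d)) :
    3*(b*c*d) + 3*(a*c*d) + 3*(a*b*d) + 5*(a*b*c) ≤ 6*(a*b*c*d) ∨
      (a = 2 ∧ b = 2 ∧ c = 2 ∧ d = 3) := by
  rcases Nat.lt_or_ge d 4 with hd4 | hd4
  · have ha3 : a ≤ 3 := by omega
    have hb3 : b ≤ 3 := by omega
    have hc3 : c ≤ 3 := by omega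
    interval_cases a <;> interval_cases b <;> interval_cases c <;> interval_cases d <;> omega
  · left
    have h1 : 2*(b*c*d) ≤ a*(b*c*d) := Nat.mul_le_mul_right _ ha
    have h2 : 2*(a*c*d) ≤ b*(a*c*d) := Nat.mul_le_mul_right _ (by omega)
    have h3 : 2*(a*b*d) ≤ c*(a*b*d) := Nat.mul_le_mul_right _ (by omega)
    have h4 : 4*(a*b*c) ≤ d*(a*b*c) := Nat.mul_le_mul_right _ hd4
    nlinarith [h1, h2, h3, h4]

set_option maxHeartbeats 2000000 in
/-- Hurwitz-type bound: if `2g - 2 = n (2h - 2 + ∑ (1 - 1/νᵢ))` with `g ≥ 2`, `n ≥ 1`,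
`k ≥ 1`, `ν₁ ≤ … ≤ ν_k`, each `νᵢ ≥ 2`, then `n / ν_k ≤ 3(g-1)` unless `h = 0` and
the tuple `(ν₁,…,ν_k)` is one of the eight exceptional types. -/
theorem hurwitz_bound (g h n k : ℕ) (hg : 2 ≤ g) (hn : 1 ≤ n) (hk : 1 ≤ k)
    (ν : Fin k → ℕ) (hmono : Monotone ν) (hν : ∀ i, 2 ≤ ν i)
    (hurwitz : (2 * (g : ℚ) - 2) = n * (2 * (h : ℚ) - 2 + ∑ i, (1 - 1 / (ν i : ℚ)))) :
    (n : ℚ) / (ν ⟨k - 1, by omega⟩ : ℚ) ≤ 3 * ((g : ℚ) - 1) ∨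
      (h = 0 ∧ List.ofFn ν ∈ [[2, 2, 2, 3], [2, 3, 7], [2, 3, 8], [2, 3, 9],
        [2, 4, 5], [2, 4, 6], [2, 5, 5], [3, 3, 4]]) := by
  have hν0 : ∀ i, (0:ℚ) < (ν i : ℚ) := fun i => by
    have := hν i; exact_mod_cast Nat.lt_of_lt_of_le (by norm_num) this
  set S : ℚ := ∑ i, (1 - 1 / (ν i : ℚ)) with hS
  set μ : ℚ := 2 * (h : ℚ) - 2 + S with hμdef
  have hg2 : (2:ℚ) ≤ (g:ℚ) := by exact_mod_cast hg
  have hn1 : (1:ℚ) ≤ (n:ℚ) := by exact_mod_cast hn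
  have hμpos : 0 < μ := by
    by_contra hcon
    push_neg at hcon
    have : (n:ℚ) * μ ≤ 0 := mul_nonpos_of_nonneg_of_nonpos (by positivity) hcon
    linarith [hurwitz]
  have hS2 : (k:ℚ)/2 ≤ S := by
    have : ∑ _i : Fin k, (1/2 : ℚ) ≤ S := by
      apply Finset.sum_le_sum
      intro i _
      have h2i : (2:ℚ) ≤ (ν i : ℚ) := by exact_mod_cast hν i
      have : 1 / (ν i : ℚ) ≤ 1/2 := one_div_le_one_div_of_le (by norm_num) h2i
      linarith
    simpa [Finset.sum_const, div_eq_mul_inv, mul_comm] using this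
  have hSk : S < k := by
    have : S < ∑ _i : Fin k, (1 : ℚ) := by
      apply Finset.sum_lt_sum_of_nonempty
      · exact Finset.univ_nonempty_iff.mpr ⟨⟨0, by omega⟩⟩
      · intro i _
        have := hν0 i
        have : 0 < 1 / (ν i : ℚ) := by positivity
        linarith
    simpa using this
  have hck : 2 ≤ ν ⟨k - 1, by omega⟩ := hν _
  have hc0 : (0:ℚ) < (ν ⟨k - 1, by omega⟩ : ℚ) := hν0 _
  have reduce : 2/(3*(ν ⟨k - 1, by omega⟩ : ℚ)) ≤ μ →
      (n : ℚ) / (ν ⟨k - 1, by omega⟩ : ℚ) ≤ 3 * ((g : ℚ) - 1) := by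
    intro hμ
    rw [div_le_iff₀ hc0]
    have h1 : (2:ℚ) ≤ μ*(3*(ν ⟨k - 1, by omega⟩ : ℚ)) := by
      rw [div_le_iff₀ (by positivity)] at hμ; linarith
    have h2 : (n:ℚ)*2 ≤ (n:ℚ)*(μ*(3*(ν ⟨k - 1, by omega⟩ : ℚ))) :=
      mul_le_mul_of_nonneg_left h1 (by positivity)
    have h3 : (n:ℚ)*(μ*(3*(ν ⟨k - 1, by omega⟩ : ℚ))) =
        (2*(g:ℚ)-2)*(3*(ν ⟨k - 1, by omega⟩ : ℚ)) := by rw [hurwitz]; ring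
    nlinarith [h2, h3]
  by_cases hcase : 1 ≤ h ∨ 5 ≤ k
  · left
    apply reduce
    have hμhalf : (1:ℚ)/2 ≤ μ := by
      rcases hcase with hh | hk5
      · have : (1:ℚ) ≤ (h:ℚ) := by exact_mod_cast hh
        have hk1 : (1:ℚ) ≤ (k:ℚ) := by exact_mod_cast hk
        rw [hμdef]; linarith
      · have : (5:ℚ) ≤ (k:ℚ) := by exact_mod_cast hk5
        have hh0 : (0:ℚ) ≤ (h:ℚ) := by positivity
        rw [hμdef]; linarith
    have : 2/(3*(ν ⟨k - 1, by omega⟩ : ℚ)) ≤ 1/2 := by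
      rw [div_le_iff₀ (by positivity)]
      have : (2:ℚ) ≤ (ν ⟨k - 1, by omega⟩ : ℚ) := by exact_mod_cast hck
      linarith
    linarith
  · push_neg at hcase
    obtain ⟨hh0, hk4⟩ := hcase
    have hh : h = 0 := by omega
    subst hh
    have hμS : μ = S - 2 := by rw [hμdef]; push_cast; ring
    have hk3 : 3 ≤ k := by
      by_contra hcon
      have : (k:ℚ) ≤ 2 := by exact_mod_cast (by omega : k ≤ 2)
      linarith [hμpos, hSk, hμS]
    have hk4' : k ≤ 4 := by omega
    clear_value S μ
    clear hS2 hSk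
    interval_cases k
    · -- k = 3
      have hab : ν 0 ≤ ν 1 := hmono (by decide)
      have hbc : ν 1 ≤ ν 2 := hmono (by decide)
      have ha2 : 2 ≤ ν 0 := hν 0
      have h0 := hν0 0; have h1 := hν0 1; have h2 := hν0 2
      have h0' : ((ν 0:ℕ):ℚ) ≠ 0 := ne_of_gt h0
      have h1' : ((ν 1:ℕ):ℚ) ≠ 0 := ne_of_gt h1
      have h2' : ((ν 2:ℕ):ℚ) ≠ 0 := ne_of_gt h2
      have hμval : μ = 1 - 1/(ν 0:ℚ) - 1/(ν 1:ℚ) - 1/(ν 2:ℚ) := by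
        rw [hμS, hS, Fin.sum_univ_three]; ring
      have e1 : (1 - 1/(ν 0:ℚ) - 1/(ν 1:ℚ) - 1/(ν 2:ℚ)) * ((ν 0:ℚ)*(ν 1:ℚ)*(ν 2:ℚ)) =
          (ν 0:ℚ)*(ν 1:ℚ)*(ν 2:ℚ) - ((ν 0:ℚ)*(ν 1:ℚ) + (ν 1:ℚ)*(ν 2:ℚ) + (ν 0:ℚ)*(ν 2:ℚ)) := by
        field_simp; ring
      have hXpos : 0 < (1 - 1/(ν 0:ℚ) - 1/(ν 1:ℚ) - 1/(ν 2:ℚ)) := hμval ▸ hμpos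
      have hmul := mul_pos hXpos (by positivity : (0:ℚ) < (ν 0:ℚ)*(ν 1:ℚ)*(ν 2:ℚ))
      rw [e1] at hmul
      have hposN : ν 0 * ν 1 + ν 1 * ν 2 + ν 0 * ν 2 < ν 0 * ν 1 * ν 2 := by
        have : ((ν 0:ℚ)*(ν 1:ℚ) + (ν 1:ℚ)*(ν 2:ℚ) + (ν 0:ℚ)*(ν 2:ℚ)) < (ν 0:ℚ)*(ν 1:ℚ)*(ν 2:ℚ) := by
          linarith
        exact_mod_cast this
      have hofn : List.ofFn ν = [ν 0, ν 1, ν 2] := by simp [List.ofFn_succ]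
      rcases key3 (ν 0) (ν 1) (ν 2) ha2 hab hbc hposN with hkey | hex
      · left
        apply reduce
        show 2/(3*((ν 2 : ℕ):ℚ)) ≤ μ
        rw [hμval]
        have hkeyQ : (5*((ν 0:ℚ)*(ν 1:ℚ))+3*((ν 1:ℚ)*(ν 2:ℚ))+3*((ν 0:ℚ)*(ν 2:ℚ))) ≤
            3*((ν 0:ℚ)*(ν 1:ℚ)*(ν 2:ℚ)) := by exact_mod_cast hkey
        have e2 : (1 - 1/(ν 0:ℚ) - 1/(ν 1:ℚ) - 1/(ν 2:ℚ) - 2/(3*(ν 2:ℚ))) * (3*((ν 0:ℚ)*(ν 1:ℚ)*(ν 2:ℚ))) =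
            3*((ν 0:ℚ)*(ν 1:ℚ)*(ν 2:ℚ)) - (5*((ν 0:ℚ)*(ν 1:ℚ))+3*((ν 1:ℚ)*(ν 2:ℚ))+3*((ν 0:ℚ)*(ν 2:ℚ))) := by
          field_simp; ring
        nlinarith [e2, hkeyQ, (by positivity : (0:ℚ) < 3*((ν 0:ℚ)*(ν 1:ℚ)*(ν 2:ℚ)))]
      · right
        refine ⟨rfl, ?_⟩
        rw [hofn]
        rcases hex with ⟨e1,e2,e3⟩|⟨e1,e2,e3⟩|⟨e1,e2,e3⟩|⟨e1,e2,e3⟩|⟨e1,e2,e3⟩|⟨e1,e2,e3⟩|⟨e1,e2,e3⟩ <;>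
          simp [e1, e2, e3]
    · -- k = 4
      have hab : ν 0 ≤ ν 1 := hmono (by decide)
      have hbc : ν 1 ≤ ν 2 := hmono (by decide)
      have hcd : ν 2 ≤ ν 3 := hmono (by decide)
      have ha2 : 2 ≤ ν 0 := hν 0
      have h0 := hν0 0; have h1 := hν0 1; have h2 := hν0 2; have h3 := hν0 3
      have h0' : ((ν 0:ℕ):ℚ) ≠ 0 := ne_of_gt h0
      have h1' : ((ν 1:ℕ):ℚ) ≠ 0 := ne_of_gt h1
      have h2' : ((ν 2:ℕ):ℚ) ≠ 0 := ne_of_gt h2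
      have h3' : ((ν 3:ℕ):ℚ) ≠ 0 := ne_of_gt h3
      have hμval : μ = 2 - 1/(ν 0:ℚ) - 1/(ν 1:ℚ) - 1/(ν 2:ℚ) - 1/(ν 3:ℚ) := by
        rw [hμS, hS, Fin.sum_univ_four]; ring
      have e1 : (2 - 1/(ν 0:ℚ) - 1/(ν 1:ℚ) - 1/(ν 2:ℚ) - 1/(ν 3:ℚ)) *
            ((ν 0:ℚ)*(ν 1:ℚ)*(ν 2:ℚ)*(ν 3:ℚ)) =
          2*((ν 0:ℚ)*(ν 1:ℚ)*(ν 2:ℚ)*(ν 3:ℚ)) -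
            ((ν 1:ℚ)*(ν 2:ℚ)*(ν 3:ℚ) + (ν 0:ℚ)*(ν 2:ℚ)*(ν 3:ℚ) +
             (ν 0:ℚ)*(ν 1:ℚ)*(ν 3:ℚ) + (ν 0:ℚ)*(ν 1:ℚ)*(ν 2:ℚ)) := by
        field_simp; ring
      have hXpos : 0 < (2 - 1/(ν 0:ℚ) - 1/(ν 1:ℚ) - 1/(ν 2:ℚ) - 1/(ν 3:ℚ)) := hμval ▸ hμpos
      have hmul := mul_pos hXpos
        (by positivity : (0:ℚ) < (ν 0:ℚ)*(ν 1:ℚ)*(ν 2:ℚ)*(ν 3:ℚ))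
      rw [e1] at hmul
      have hposN : ν 1 * ν 2 * ν 3 + ν 0 * ν 2 * ν 3 + ν 0 * ν 1 * ν 3 + ν 0 * ν 1 * ν 2 <
          2*(ν 0 * ν 1 * ν 2 * ν 3) := by
        have : ((ν 1:ℚ)*(ν 2:ℚ)*(ν 3:ℚ) + (ν 0:ℚ)*(ν 2:ℚ)*(ν 3:ℚ) +
             (ν 0:ℚ)*(ν 1:ℚ)*(ν 3:ℚ) + (ν 0:ℚ)*(ν 1:ℚ)*(ν 2:ℚ)) <
            2*((ν 0:ℚ)*(ν 1:ℚ)*(ν 2:ℚ)*(ν 3:ℚ)) := by linarith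
        exact_mod_cast this
      have hofn : List.ofFn ν = [ν 0, ν 1, ν 2, ν 3] := by simp [List.ofFn_succ]
      rcases key4 (ν 0) (ν 1) (ν 2) (ν 3) ha2 hab hbc hcd hposN with hkey | hex
      · left
        apply reduce
        show 2/(3*((ν 3 : ℕ):ℚ)) ≤ μ
        rw [hμval]
        have hkeyQ : (3*((ν 1:ℚ)*(ν 2:ℚ)*(ν 3:ℚ)) + 3*((ν 0:ℚ)*(ν 2:ℚ)*(ν 3:ℚ)) +
              3*((ν 0:ℚ)*(ν 1:ℚ)*(ν 3:ℚ)) + 5*((ν 0:ℚ)*(ν 1:ℚ)*(ν 2:ℚ))) ≤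
            6*((ν 0:ℚ)*(ν 1:ℚ)*(ν 2:ℚ)*(ν 3:ℚ)) := by exact_mod_cast hkey
        have e2 : (2 - 1/(ν 0:ℚ) - 1/(ν 1:ℚ) - 1/(ν 2:ℚ) - 1/(ν 3:ℚ) - 2/(3*(ν 3:ℚ))) *
              (3*((ν 0:ℚ)*(ν 1:ℚ)*(ν 2:ℚ)*(ν 3:ℚ))) =
            6*((ν 0:ℚ)*(ν 1:ℚ)*(ν 2:ℚ)*(ν 3:ℚ)) -
              (3*((ν 1:ℚ)*(ν 2:ℚ)*(ν 3:ℚ)) + 3*((ν 0:ℚ)*(ν 2:ℚ)*(ν 3:ℚ)) +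
               3*((ν 0:ℚ)*(ν 1:ℚ)*(ν 3:ℚ)) + 5*((ν 0:ℚ)*(ν 1:ℚ)*(ν 2:ℚ))) := by
          field_simp; ring
        nlinarith [e2, hkeyQ,
          (by positivity : (0:ℚ) < 3*((ν 0:ℚ)*(ν 1:ℚ)*(ν 2:ℚ)*(ν 3:ℚ)))]
      · right
        refine ⟨rfl, ?_⟩
        rw [hofn]
        obtain ⟨e1, e2, e3, e4⟩ := hex
        simp [e1, e2, e3, e4]
end

section
/- Let k ≥ 1 be an integer and let ν₁ ≤ ν₂ ≤ … ≤ ν_k be integers with each ν_i ≥ 2. Set λ = ν_k·(∑_{i=1}^{k}(1 − 1/ν_i) − 2), a rational number. Then 0 < λ < 2/3 holds if and only if the tuple (ν₁,…,ν_k) is one of the eight tuples (2,2,2,3), (2,3,7), (2,3,8), (2,3,9), (2,4,5), (2,4,6), (2,5,5), (3,3,4). -/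
private theorem clear3 (a b c : ℕ) (ha : 2 ≤ a) (hab : a ≤ b) (hbc : b ≤ c)
    (h1 : 0 < (c:ℚ) * (1 - 1/a - 1/b - 1/c))
    (h2 : (c:ℚ) * (1 - 1/a - 1/b - 1/c) < 2/3) :
    a * b + c * a + c * b < c * (a * b) ∧
      3 * (c * (a * b)) < 5 * (a * b) + 3 * (c * a) + 3 * (c * b) := by
  have ha' : (0:ℚ) < a := by exact_mod_cast by omega
  have hb' : (0:ℚ) < b := by exact_mod_cast by omega
  have hc' : (0:ℚ) < c := by exact_mod_cast by omega
  have key : (c:ℚ) * (1 - 1/a - 1/b - 1/c) * (a * b) =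
      c * (a*b) - (a*b + c*a + c*b) := by field_simp; ring
  constructor
  · have := mul_pos h1 (mul_pos ha' hb')
    rw [key] at this
    have h : (↑(a*b + c*a + c*b) : ℚ) < ↑(c * (a*b)) := by push_cast; linarith
    exact_mod_cast h
  · have := mul_lt_mul_of_pos_right h2 (by positivity : (0:ℚ) < 3 * (a * b))
    have h : (↑(3 * (c * (a*b))) : ℚ) < ↑(5 * (a*b) + 3*(c*a) + 3*(c*b)) := by
      push_cast
      nlinarith [key]
    exact_mod_cast h

private theorem enum3 (a b c : ℕ) (ha : 2 ≤ a) (hab : a ≤ b) (hbc : b ≤ c)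
    (H1 : a * b + c * a + c * b < c * (a * b))
    (H2 : 3 * (c * (a * b)) < 5 * (a * b) + 3 * (c * a) + 3 * (c * b)) :
    (a, b, c) ∈ [(2,3,7),(2,3,8),(2,3,9),(2,4,5),(2,4,6),(2,5,5),(3,3,4)] := by
  zify at H1 H2
  have ha' : (2:ℤ) ≤ a := by exact_mod_cast ha
  have hab' : (a:ℤ) ≤ b := by exact_mod_cast hab
  have hbc' : (b:ℤ) ≤ c := by exact_mod_cast hbc
  have hA : a ≤ 3 := by
    by_contra h
    have h4 : (4:ℤ) ≤ a := by exact_mod_cast by omega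
    have e1 : (a:ℤ)*b - 2*a - 2*b ≥ 0 := by nlinarith
    nlinarith [mul_nonneg (by linarith : (0:ℤ) ≤ (c:ℤ)) e1,
      mul_nonneg (by linarith : (0:ℤ) ≤ (3*(c:ℤ) - 10)) (by nlinarith : (0:ℤ) ≤ (a:ℤ)*b)]
  have hB : b ≤ 5 := by
    by_contra h
    have h6 : (6:ℤ) ≤ b := by exact_mod_cast by omega
    have e2 : 2*(a:ℤ)*b - 3*a - 3*b ≥ 0 := by nlinarith
    nlinarith [mul_nonneg (by linarith : (0:ℤ) ≤ (c:ℤ)) e2,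
      mul_nonneg (by linarith : (0:ℤ) ≤ (c:ℤ) - 6) (by nlinarith : (0:ℤ) ≤ (a:ℤ)*b)]
  have e3 : 1 ≤ (a:ℤ)*b - a - b := by nlinarith
  have hC : c ≤ 24 := by
    by_contra h
    have h25 : (25:ℤ) ≤ c := by exact_mod_cast by omega
    have hab15 : (a:ℤ)*b ≤ 15 := by
      have h3 : (a:ℤ) ≤ 3 := by exact_mod_cast hA
      have h5 : (b:ℤ) ≤ 5 := by exact_mod_cast hB
      nlinarith
    nlinarith [mul_le_mul h25 e3 (by linarith) (by linarith)]
  interval_cases a <;> interval_cases b <;> interval_cases c <;>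
    first | (exfalso; omega) | decide

private theorem core4 (a b c d : ℕ) (ha : 2 ≤ a) (hab : a ≤ b) (hbc : b ≤ c) (hcd : c ≤ d)
    (h1 : 0 < (d:ℚ) * (2 - 1/a - 1/b - 1/c - 1/d))
    (h2 : (d:ℚ) * (2 - 1/a - 1/b - 1/c - 1/d) < 2/3) :
    a = 2 ∧ b = 2 ∧ c = 2 ∧ d = 3 := by
  have ha' : (0:ℚ) < a := by exact_mod_cast by omega
  have hb' : (0:ℚ) < b := by exact_mod_cast by omega
  have hc' : (0:ℚ) < c := by exact_mod_cast by omega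
  have hd' : (0:ℚ) < d := by exact_mod_cast by omega
  have key : (d:ℚ) * (2 - 1/a - 1/b - 1/c - 1/d) * (a*b*c) =
      2*(d*(a*b*c)) - (a*b*c + d*(b*c) + d*(a*c) + d*(a*b)) := by field_simp; ring
  have H1 : a*b*c + d*(b*c) + d*(a*c) + d*(a*b) < 2*(d*(a*b*c)) := by
    have := mul_pos h1 (by positivity : (0:ℚ) < (a:ℚ)*b*c)
    rw [key] at this
    have h : (↑(a*b*c + d*(b*c) + d*(a*c) + d*(a*b)) : ℚ) < ↑(2*(d*(a*b*c))) := by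
      push_cast; linarith
    exact_mod_cast h
  have H2 : 6*(d*(a*b*c)) < 5*(a*b*c) + 3*(d*(b*c)) + 3*(d*(a*c)) + 3*(d*(a*b)) := by
    have := mul_lt_mul_of_pos_right h2 (by positivity : (0:ℚ) < 3*((a:ℚ)*b*c))
    have h : (↑(6*(d*(a*b*c))) : ℚ) < ↑(5*(a*b*c) + 3*(d*(b*c)) + 3*(d*(a*c)) + 3*(d*(a*b))) := by
      push_cast; nlinarith [key]
    exact_mod_cast h
  zify at H1 H2
  have ha2 : (2:ℤ) ≤ a := by exact_mod_cast ha
  have hab' : (a:ℤ) ≤ b := by exact_mod_cast hab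
  have hbc' : (b:ℤ) ≤ c := by exact_mod_cast hbc
  have hcd' : (c:ℤ) ≤ d := by exact_mod_cast hcd
  have hc2 : c ≤ 2 := by
    by_contra h
    have h3 : (3:ℤ) ≤ c := by exact_mod_cast by omega
    have e : 4*((a:ℤ)*b*c) - 3*(b*c) - 3*(a*c) - 3*(a*b) ≥ 0 := by
      nlinarith [mul_nonneg (by linarith : (0:ℤ) ≤ (a:ℤ) - 2) (by positivity : (0:ℤ) ≤ (b:ℤ)*c),
        mul_nonneg (by linarith : (0:ℤ) ≤ (b:ℤ) - 2) (by positivity : (0:ℤ) ≤ (a:ℤ)*c),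
        mul_nonneg (by linarith : (0:ℤ) ≤ (c:ℤ) - 3) (by positivity : (0:ℤ) ≤ (a:ℤ)*b)]
    nlinarith [mul_nonneg (by linarith : (0:ℤ) ≤ (d:ℤ)) e,
      mul_nonneg (by linarith : (0:ℤ) ≤ 2*(d:ℤ) - 5)
        (by positivity : (0:ℤ) ≤ (a:ℤ)*b*c)]
  have ea : a = 2 := by omega
  have eb : b = 2 := by omega
  have ec : c = 2 := by omega
  refine ⟨ea, eb, ec, ?_⟩
  subst ea eb ec
  push_cast at H1 H2
  omega

/-- For a nondecreasing tuple `ν₁ ≤ … ≤ ν_k` of integers `≥ 2`, setting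
`λ = ν_k (∑ (1 - 1/νᵢ) - 2)`, one has `0 < λ < 2/3` iff the tuple is one of the
eight exceptional types. -/
theorem lambda_lt_two_thirds_iff (k : ℕ) (hk : 1 ≤ k)
    (ν : Fin k → ℕ) (hmono : Monotone ν) (hν : ∀ i, 2 ≤ ν i) :
    (0 < (ν ⟨k - 1, by omega⟩ : ℚ) * ((∑ i, (1 - 1 / (ν i : ℚ))) - 2) ∧
      (ν ⟨k - 1, by omega⟩ : ℚ) * ((∑ i, (1 - 1 / (ν i : ℚ))) - 2) < 2 / 3) ↔
    List.ofFn ν ∈ [[2, 2, 2, 3], [2, 3, 7], [2, 3, 8], [2, 3, 9],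
      [2, 4, 5], [2, 4, 6], [2, 5, 5], [3, 3, 4]] := by
  have hpos : ∀ i, (0:ℚ) < (ν i : ℚ) := fun i => by
    have := hν i; exact_mod_cast by omega
  constructor
  · rintro ⟨h1, h2⟩
    have hklt : k - 1 < k := by omega
    have hN2 : (2:ℚ) ≤ (ν ⟨k-1, hklt⟩ : ℚ) := by exact_mod_cast hν _
    have hS2 : 2 < ∑ i, (1 - 1/(ν i : ℚ)) := by
      by_contra h
      push_neg at h
      have hN : (0:ℚ) < (ν ⟨k-1, hklt⟩ : ℚ) := hpos _
      nlinarith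
    have hS73 : ∑ i, (1 - 1/(ν i : ℚ)) < 7/3 := by
      nlinarith [mul_le_mul_of_nonneg_right hN2
        (by linarith : (0:ℚ) ≤ (∑ i, (1 - 1/(ν i : ℚ))) - 2)]
    have hup : ∑ i, (1 - 1/(ν i : ℚ)) < k := by
      calc ∑ i, (1 - 1/(ν i : ℚ)) < ∑ _i : Fin k, (1:ℚ) := by
            apply Finset.sum_lt_sum_of_nonempty
            · exact Finset.univ_nonempty_iff.mpr ⟨⟨0, by omega⟩⟩
            · intro i _
              have := hpos i
              have : (0:ℚ) < 1 / (ν i : ℚ) := by positivity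
              linarith
        _ = k := by simp
    have hlow : (k:ℚ)/2 ≤ ∑ i, (1 - 1/(ν i : ℚ)) := by
      calc (k:ℚ)/2 = ∑ _i : Fin k, (1/2 : ℚ) := by simp; ring
        _ ≤ ∑ i, (1 - 1/(ν i : ℚ)) := by
            apply Finset.sum_le_sum
            intro i _
            have h2i : (2:ℚ) ≤ (ν i : ℚ) := by exact_mod_cast hν i
            have : 1 / (ν i : ℚ) ≤ 1/2 := by
              apply one_div_le_one_div_of_le <;> linarith
            linarith
    have hk3 : 3 ≤ k := by
      have : (2:ℚ) < (k:ℚ) := lt_trans hS2 hup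
      exact_mod_cast by exact_mod_cast this.trans_le (le_refl _) |>.le |> fun _ => (by
        have : (2:ℚ) < (k:ℚ) := ‹_›
        have : 2 < k := by exact_mod_cast this
        omega : 3 ≤ k)
    have hk4 : k ≤ 4 := by
      have : (k:ℚ) < 14/3 := by linarith
      have : k < 5 := by
        by_contra hh
        push_neg at hh
        have : (5:ℚ) ≤ (k:ℚ) := by exact_mod_cast hh
        linarith
      omega
    have hk34 : k = 3 ∨ k = 4 := by omega
    rcases hk34 with rfl | rfl
    · -- k = 3
      have hfn : List.ofFn ν = [ν 0, ν 1, ν 2] := rfl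
      rw [Fin.sum_univ_three] at h1 h2
      have hNe : (ν ⟨3-1, by omega⟩ : ℚ) = (ν 2 : ℚ) := rfl
      rw [hNe] at h1 h2
      have e : ((1 - 1/(ν 0 : ℚ)) + (1 - 1/(ν 1 : ℚ)) + (1 - 1/(ν 2 : ℚ))) - 2 =
          1 - 1/(ν 0 : ℚ) - 1/(ν 1 : ℚ) - 1/(ν 2 : ℚ) := by ring
      rw [e] at h1 h2
      obtain ⟨H1, H2⟩ := clear3 (ν 0) (ν 1) (ν 2) (hν 0)
        (hmono (by decide)) (hmono (by decide)) h1 h2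
      have key := enum3 (ν 0) (ν 1) (ν 2) (hν 0)
        (hmono (by decide)) (hmono (by decide)) H1 H2
      simp only [List.mem_cons, List.not_mem_nil, or_false, Prod.mk.injEq,
        List.mem_singleton] at key
      rw [hfn]
      rcases key with ⟨e1,e2,e3⟩|⟨e1,e2,e3⟩|⟨e1,e2,e3⟩|⟨e1,e2,e3⟩|⟨e1,e2,e3⟩|⟨e1,e2,e3⟩|⟨e1,e2,e3⟩ <;>
        simp [e1, e2, e3]
    · -- k = 4
      have hfn : List.ofFn ν = [ν 0, ν 1, ν 2, ν 3] := rfl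
      rw [Fin.sum_univ_four] at h1 h2
      have hNe : (ν ⟨4-1, by omega⟩ : ℚ) = (ν 3 : ℚ) := rfl
      rw [hNe] at h1 h2
      have e : ((1 - 1/(ν 0 : ℚ)) + (1 - 1/(ν 1 : ℚ)) + (1 - 1/(ν 2 : ℚ)) + (1 - 1/(ν 3 : ℚ))) - 2 =
          2 - 1/(ν 0 : ℚ) - 1/(ν 1 : ℚ) - 1/(ν 2 : ℚ) - 1/(ν 3 : ℚ) := by ring
      rw [e] at h1 h2
      obtain ⟨e1, e2, e3, e4⟩ := core4 (ν 0) (ν 1) (ν 2) (ν 3) (hν 0)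
        (hmono (by decide)) (hmono (by decide)) (hmono (by decide)) h1 h2
      rw [hfn]
      simp [e1, e2, e3, e4]
  · intro h
    simp only [List.mem_cons, List.not_mem_nil, or_false, List.mem_singleton] at h
    rcases h with h|h|h|h|h|h|h|h
    · obtain rfl : k = 4 := by simpa using congrArg List.length h
      obtain rfl : ν = ![2,2,2,3] := List.ofFn_injective (by rw [h]; rfl)
      refine ⟨?_, ?_⟩ <;>
        norm_num [Fin.sum_univ_four, Matrix.cons_val_two, Matrix.cons_val_three, Matrix.vecHead, Matrix.vecTail, (by decide : (![2,2,2,3] : Fin 4 → ℕ) ⟨4-1, by norm_num⟩ = 3)]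
    · obtain rfl : k = 3 := by simpa using congrArg List.length h
      obtain rfl : ν = ![2,3,7] := List.ofFn_injective (by rw [h]; rfl)
      refine ⟨?_, ?_⟩ <;>
        norm_num [Fin.sum_univ_three, Matrix.cons_val_two, Matrix.vecHead, Matrix.vecTail, (by decide : (![2,3,7] : Fin 3 → ℕ) ⟨3-1, by norm_num⟩ = 7)]
    · obtain rfl : k = 3 := by simpa using congrArg List.length h
      obtain rfl : ν = ![2,3,8] := List.ofFn_injective (by rw [h]; rfl)
      refine ⟨?_, ?_⟩ <;>
        norm_num [Fin.sum_univ_three, Matrix.cons_val_two, Matrix.vecHead, Matrix.vecTail, (by decide : (![2,3,8] : Fin 3 → ℕ) ⟨3-1, by norm_num⟩ = 8)]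
    · obtain rfl : k = 3 := by simpa using congrArg List.length h
      obtain rfl : ν = ![2,3,9] := List.ofFn_injective (by rw [h]; rfl)
      refine ⟨?_, ?_⟩ <;>
        norm_num [Fin.sum_univ_three, Matrix.cons_val_two, Matrix.vecHead, Matrix.vecTail, (by decide : (![2,3,9] : Fin 3 → ℕ) ⟨3-1, by norm_num⟩ = 9)]
    · obtain rfl : k = 3 := by simpa using congrArg List.length h
      obtain rfl : ν = ![2,4,5] := List.ofFn_injective (by rw [h]; rfl)
      refine ⟨?_, ?_⟩ <;>
        norm_num [Fin.sum_univ_three, Matrix.cons_val_two, Matrix.vecHead, Matrix.vecTail, (by decide : (![2,4,5] : Fin 3 → ℕ) ⟨3-1, by norm_num⟩ = 5)]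
    · obtain rfl : k = 3 := by simpa using congrArg List.length h
      obtain rfl : ν = ![2,4,6] := List.ofFn_injective (by rw [h]; rfl)
      refine ⟨?_, ?_⟩ <;>
        norm_num [Fin.sum_univ_three, Matrix.cons_val_two, Matrix.vecHead, Matrix.vecTail, (by decide : (![2,4,6] : Fin 3 → ℕ) ⟨3-1, by norm_num⟩ = 6)]
    · obtain rfl : k = 3 := by simpa using congrArg List.length h
      obtain rfl : ν = ![2,5,5] := List.ofFn_injective (by rw [h]; rfl)
      refine ⟨?_, ?_⟩ <;>
        norm_num [Fin.sum_univ_three, Matrix.cons_val_two, Matrix.vecHead, Matrix.vecTail, (by decide : (![2,5,5] : Fin 3 → ℕ) ⟨3-1, by norm_num⟩ = 5)]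
    · obtain rfl : k = 3 := by simpa using congrArg List.length h
      obtain rfl : ν = ![3,3,4] := List.ofFn_injective (by rw [h]; rfl)
      refine ⟨?_, ?_⟩ <;>
        norm_num [Fin.sum_univ_three, Matrix.cons_val_two, Matrix.vecHead, Matrix.vecTail, (by decide : (![3,3,4] : Fin 3 → ℕ) ⟨3-1, by norm_num⟩ = 4)]
end

section
/- Let g ≥ 2 and m ≥ 1 be integers with m ≤ 3(g − 1), and let r₁,…,r_m be integers with each r_i ≥ 2. Define the abstract slope ν = 2 + (1 − (1/m)∑_{i=1}^{m} 1/r_i²) / ((2g − 2)/m + 1 − (1/m)∑_{i=1}^{m} 1/r_i), a real number. Then ν ≤ 8/3, with equality if and only if m = 3(g − 1) and r_i = 3 for all i. -/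
lemma slope_term_le (n : ℕ) (hn : 2 ≤ n) :
    1 + 2/(n:ℚ) - 3/(n:ℚ)^2 ≤ 4/3 := by
  have hn0 : (0:ℚ) < n := by exact_mod_cast Nat.lt_of_lt_of_le Nat.zero_lt_two hn
  have h : 4/3 - (1 + 2/(n:ℚ) - 3/(n:ℚ)^2) = ((n:ℚ)-3)^2/(3*(n:ℚ)^2) := by
    field_simp
    ring
  have h2 : (0:ℚ) ≤ ((n:ℚ)-3)^2/(3*(n:ℚ)^2) := by positivity
  linarith

lemma slope_term_eq (n : ℕ) (hn : 2 ≤ n) :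
    1 + 2/(n:ℚ) - 3/(n:ℚ)^2 = 4/3 ↔ n = 3 := by
  have hn0 : (0:ℚ) < n := by exact_mod_cast Nat.lt_of_lt_of_le Nat.zero_lt_two hn
  constructor
  · intro h
    field_simp at h
    have h2 : (n:ℚ)*((n:ℚ)-3)^2 = 0 := by linear_combination (-(n:ℚ))*h
    have h3 : ((n:ℚ)-3)^2 = 0 := by
      rcases mul_eq_zero.mp h2 with h4 | h4
      · exact absurd h4 hn0.ne'
      · exact h4
    have : (n:ℚ) = 3 := by nlinarith [h3]
    exact_mod_cast this
  · rintro rfl; norm_num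

/-- For `g ≥ 2`, `1 ≤ m ≤ 3(g-1)` and integers `r₁,…,r_m ≥ 2`, the abstract slope
`ν = 2 + (1 - (1/m) ∑ 1/rᵢ²) / ((2g-2)/m + 1 - (1/m) ∑ 1/rᵢ)` satisfies `ν ≤ 8/3`,
with equality iff `m = 3(g-1)` and all `rᵢ = 3`. -/
theorem abstract_slope_le_eight_thirds (g m : ℕ) (hg : 2 ≤ g) (hm : 1 ≤ m)
    (hm3 : m ≤ 3 * (g - 1)) (r : Fin m → ℕ) (hr : ∀ i, 2 ≤ r i) :
    2 + (1 - (1 / (m : ℚ)) * ∑ i, 1 / (r i : ℚ) ^ 2) /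
        ((2 * (g : ℚ) - 2) / m + 1 - (1 / (m : ℚ)) * ∑ i, 1 / (r i : ℚ)) ≤ 8 / 3 ∧
    (2 + (1 - (1 / (m : ℚ)) * ∑ i, 1 / (r i : ℚ) ^ 2) /
        ((2 * (g : ℚ) - 2) / m + 1 - (1 / (m : ℚ)) * ∑ i, 1 / (r i : ℚ)) = 8 / 3 ↔
      m = 3 * (g - 1) ∧ ∀ i, r i = 3) := by
  have hm0 : (0:ℚ) < m := by exact_mod_cast hm
  have hg1 : 1 ≤ g := le_trans one_le_two hg
  have hgq : (2:ℚ) ≤ g := by exact_mod_cast hg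
  have hm3q : (m:ℚ) ≤ 3*((g:ℚ)-1) := by
    have := (Nat.cast_le (α := ℚ)).mpr hm3
    rwa [Nat.cast_mul, Nat.cast_sub hg1] at this
  set S1 : ℚ := ∑ i, 1/(r i : ℚ) with hS1def
  set S2 : ℚ := ∑ i, 1/(r i : ℚ)^2 with hS2def
  -- sum identity
  have hsum : ∑ i : Fin m, (1 + 2/(r i:ℚ) - 3/(r i:ℚ)^2) = (m:ℚ) + 2*S1 - 3*S2 := by
    rw [Finset.sum_sub_distrib, Finset.sum_add_distrib, Finset.sum_const,
      Finset.card_univ, Fintype.card_fin, nsmul_eq_mul, mul_one, hS1def, hS2def,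
      Finset.mul_sum, Finset.mul_sum]
    congr 1
    · congr 1
      exact Finset.sum_congr rfl fun i _ => by ring
    · exact Finset.sum_congr rfl fun i _ => by ring
  -- termwise bound
  have hsumle : ∑ i : Fin m, (1 + 2/(r i:ℚ) - 3/(r i:ℚ)^2) ≤ (4/3) * (m:ℚ) := by
    calc ∑ i : Fin m, (1 + 2/(r i:ℚ) - 3/(r i:ℚ)^2)
        ≤ ∑ _i : Fin m, (4/3 : ℚ) :=
          Finset.sum_le_sum fun i _ => slope_term_le (r i) (hr i)
      _ = (4/3) * (m:ℚ) := by
          rw [Finset.sum_const, Finset.card_univ, Fintype.card_fin, nsmul_eq_mul]; ring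
  -- S1 bound and denominator positivity
  have hS1le : S1 ≤ (m:ℚ)/2 := by
    rw [hS1def]
    calc ∑ i, 1/(r i : ℚ) ≤ ∑ _i : Fin m, (1/2 : ℚ) := by
          apply Finset.sum_le_sum
          intro i _
          have h2 : (2:ℚ) ≤ r i := by exact_mod_cast hr i
          rw [div_le_div_iff₀ (by linarith) (by norm_num)]
          linarith
      _ = (m:ℚ)/2 := by
          rw [Finset.sum_const, Finset.card_univ, Fintype.card_fin, nsmul_eq_mul]; ring
  have hD : (0:ℚ) < 2*(g:ℚ) - 2 + m - S1 := by linarith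
  have hDne : (2*(g:ℚ) - 2 + m - S1) ≠ 0 := hD.ne'
  have hB : (2*(g:ℚ)-2)/m + 1 - (1/(m:ℚ))*S1 = (2*(g:ℚ) - 2 + m - S1)/m := by
    field_simp
  have hBne : (2*(g:ℚ)-2)/m + 1 - (1/(m:ℚ))*S1 ≠ 0 := by
    rw [hB]; exact div_ne_zero hDne hm0.ne'
  have key : (1 - (1/(m:ℚ))*S2) / ((2*(g:ℚ)-2)/m + 1 - (1/(m:ℚ))*S1)
      = ((m:ℚ) - S2)/(2*(g:ℚ) - 2 + m - S1) := by
    rw [div_eq_div_iff hBne hDne, hB]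
    field_simp
  rw [key]
  constructor
  · have h1 : ((m:ℚ) - S2)/(2*(g:ℚ) - 2 + m - S1) ≤ 2/3 := by
      rw [div_le_div_iff₀ hD (by norm_num)]
      linarith [hsumle, hsum.symm.trans_le hsumle]
    linarith
  · constructor
    · intro h
      have h1 : ((m:ℚ) - S2)/(2*(g:ℚ) - 2 + m - S1) = 2/3 := by linarith
      rw [div_eq_iff hDne] at h1
      -- so m + 2 S1 - 3 S2 = 4g - 4
      have h2 : (m:ℚ) + 2*S1 - 3*S2 = 4*(g:ℚ) - 4 := by linarith
      have h3 : (4/3:ℚ)*m ≤ 4*(g:ℚ) - 4 := by linarith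
      have hmeq : (m:ℚ) = 3*((g:ℚ)-1) := by linarith [hsum, hsumle]
      have hmeqn : m = 3*(g-1) := by
        have : (m:ℚ) = ((3*(g-1):ℕ):ℚ) := by
          rw [Nat.cast_mul, Nat.cast_sub hg1]; push_cast; linarith
        exact_mod_cast this
      refine ⟨hmeqn, ?_⟩
      have hsumeq : ∑ i : Fin m, (1 + 2/(r i:ℚ) - 3/(r i:ℚ)^2)
          = ∑ _i : Fin m, (4/3:ℚ) := by
        rw [hsum, h2, Finset.sum_const, Finset.card_univ, Fintype.card_fin, nsmul_eq_mul]
        linarith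
      have := (Finset.sum_eq_sum_iff_of_le
        (fun i _ => slope_term_le (r i) (hr i))).mp hsumeq
      intro i
      exact (slope_term_eq (r i) (hr i)).mp (this i (Finset.mem_univ i))
    · rintro ⟨hmeq, hr3⟩
      have hS1v : S1 = (m:ℚ)/3 := by
        rw [hS1def]
        rw [Finset.sum_congr rfl fun i _ => by rw [hr3 i],
          Finset.sum_const, Finset.card_univ, Fintype.card_fin, nsmul_eq_mul]
        push_cast; ring
      have hS2v : S2 = (m:ℚ)/9 := by
        rw [hS2def]
        rw [Finset.sum_congr rfl fun i _ => by rw [hr3 i],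
          Finset.sum_const, Finset.card_univ, Fintype.card_fin, nsmul_eq_mul]
        push_cast; ring
      have hmq : (m:ℚ) = 3*(g:ℚ) - 3 := by
        have : (m:ℚ) = ((3*(g-1):ℕ):ℚ) := Nat.cast_inj.mpr hmeq
        rw [Nat.cast_mul, Nat.cast_sub hg1] at this
        push_cast at this
        linarith
      have : ((m:ℚ) - S2)/(2*(g:ℚ) - 2 + m - S1) = 2/3 := by
        rw [div_eq_iff hDne]
        rw [hS1v, hS2v]
        linarith
      rw [this]
      norm_num
end

section
/- Let g ≥ 2 and m ≥ 1 be integers with m ≤ 4(g − 1), and let r₁,…,r_{m+1} be integers with each r_i ≥ 2. Then 2 + (1 − (1/m)∑_{i=1}^{m} 1/r_i²) / ((2g − 2)/m + 1 − (1/m)∑_{i=1}^{m} 1/r_i) < 2 + (1 − (1/(m+1))∑_{i=1}^{m+1} 1/r_i²) / ((2g − 2)/(m+1) + 1 − (1/(m+1))∑_{i=1}^{m+1} 1/r_i); that is, the abstract slope strictly increases when the (m+1)-st component is added. -/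
/-!
With `x i = 1 / r i` and `a = 2g - 2`, clearing the factor `1/m` writes `ν - 2` as `N / D` with
`N = ∑ (1 - x i ^ 2)` and `D = a + ∑ (1 - x i)`. Adding a component adds `1 - x ^ 2` to `N` and
`1 - x` to `D`, so the new value is a mediant of `N / D` and `(1 - x ^ 2) / (1 - x) = 1 + x > 1`.
It therefore suffices that `N < D`, i.e. `∑ (x i - x i ^ 2) < a`; each term is at most `1/4`,
and `m / 4 < a` follows from `1 ≤ m ≤ 4(g - 1)`.
-/

open Finset

variable {K : Type*} [Field K]

def abstractSlope {n : ℕ} (a : K) (x : Fin n → K) : K :=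
  2 + (1 - 1 / (n : K) * ∑ i, x i ^ 2) / (a / n + 1 - 1 / (n : K) * ∑ i, x i)

def slopeNum {n : ℕ} (x : Fin n → K) : K :=
  ∑ i, (1 - x i ^ 2)

def slopeDen {n : ℕ} (a : K) (x : Fin n → K) : K :=
  a + ∑ i, (1 - x i)

theorem abstractSlope_eq_two_add_slopeNum_div {n : ℕ} (hn : (n : K) ≠ 0) (a : K)
    (x : Fin n → K) : abstractSlope a x = 2 + slopeNum x / slopeDen a x := by
  simp only [abstractSlope, slopeNum, slopeDen, sum_sub_distrib, sum_const, card_univ,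
    Fintype.card_fin, nsmul_eq_mul, mul_one]
  rw [← mul_div_mul_left _ _ hn]
  congr 2 <;> field_simp
  ring

theorem slopeNum_castSucc {n : ℕ} (x : Fin (n + 1) → K) :
    slopeNum x = slopeNum (fun i : Fin n ↦ x i.castSucc) + (1 - x (Fin.last n) ^ 2) :=
  Fin.sum_univ_castSucc _

theorem slopeDen_castSucc {n : ℕ} (a : K) (x : Fin (n + 1) → K) :
    slopeDen a x = slopeDen a (fun i : Fin n ↦ x i.castSucc) + (1 - x (Fin.last n)) := by
  rw [slopeDen, slopeDen, Fin.sum_univ_castSucc, add_assoc]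

variable [LinearOrder K] [IsStrictOrderedRing K]

theorem div_lt_add_div_add {a b c d : K} (hb : 0 < b) (hd : 0 < d) (h : a / b < c / d) :
    a / b < (a + c) / (b + d) := by
  rw [div_lt_div_iff₀ hb hd] at h
  rw [div_lt_div_iff₀ hb (add_pos hb hd)]
  linarith

theorem sub_sq_le_one_div_four (x : K) : x - x ^ 2 ≤ 1 / 4 := by
  nlinarith [sq_nonneg (x - 1 / 2)]

theorem one_lt_one_sub_sq_div_one_sub {x : K} (h0 : 0 < x) (h1 : x < 1) :
    1 < (1 - x ^ 2) / (1 - x) := by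
  rw [one_lt_div (sub_pos.2 h1)]
  nlinarith

theorem slopeDen_pos {n : ℕ} {a : K} {x : Fin n → K} (ha : 0 < a) (hx : ∀ i, x i ≤ 1) :
    0 < slopeDen a x :=
  add_pos_of_pos_of_nonneg ha (sum_nonneg fun i _ ↦ sub_nonneg.2 (hx i))

theorem slopeNum_lt_slopeDen {n : ℕ} {a : K} (x : Fin n → K) (ha : n / 4 < a) :
    slopeNum x < slopeDen a x := by
  have hsum : ∑ i, (x i - x i ^ 2) ≤ n / 4 := by
    calc ∑ i, (x i - x i ^ 2) ≤ ∑ _i : Fin n, (1 / 4 : K) :=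
          sum_le_sum fun i _ ↦ sub_sq_le_one_div_four (x i)
      _ = n / 4 := by simp [div_eq_mul_inv]
  have hdiff : slopeDen a x - slopeNum x = a - ∑ i, (x i - x i ^ 2) := by
    simp only [slopeDen, slopeNum, sum_sub_distrib]
    ring
  linarith

theorem abstractSlope_castSucc_lt {n : ℕ} (hn : n ≠ 0) {a : K} (ha : n / 4 < a)
    {x : Fin (n + 1) → K} (hx : ∀ i, x i ≤ 1) (hlast0 : 0 < x (Fin.last n))
    (hlast1 : x (Fin.last n) < 1) :
    abstractSlope a (fun i : Fin n ↦ x i.castSucc) < abstractSlope a x := by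
  have ha0 : 0 < a := lt_of_le_of_lt (by positivity) ha
  set y := fun i : Fin n ↦ x i.castSucc
  have hD := slopeDen_pos (x := y) ha0 fun i ↦ hx _
  have hNlt := slopeNum_lt_slopeDen y ha
  rw [abstractSlope_eq_two_add_slopeNum_div (Nat.cast_ne_zero.2 hn),
    abstractSlope_eq_two_add_slopeNum_div (Nat.cast_ne_zero.2 n.succ_ne_zero),
    slopeNum_castSucc, slopeDen_castSucc]
  gcongr 2 + ?_
  refine div_lt_add_div_add hD (sub_pos.2 hlast1) ?_
  calc slopeNum y / slopeDen a y < 1 := (div_lt_one hD).2 hNlt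
    _ < _ := one_lt_one_sub_sq_div_one_sub hlast0 hlast1

theorem abstract_slope_strict_mono_general (g m : ℕ) (hm : 1 ≤ m)
    (hm4 : m ≤ 4 * (g - 1)) (r : Fin (m + 1) → ℕ) (hr : ∀ i, 2 ≤ r i) :
    2 + (1 - (1 / (m : ℚ)) * ∑ i : Fin m, 1 / (r i.castSucc : ℚ) ^ 2) /
        ((2 * (g : ℚ) - 2) / m + 1 - (1 / (m : ℚ)) * ∑ i : Fin m, 1 / (r i.castSucc : ℚ)) <
    2 + (1 - (1 / ((m : ℚ) + 1)) * ∑ i, 1 / (r i : ℚ) ^ 2) /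
        ((2 * (g : ℚ) - 2) / ((m : ℚ) + 1) + 1 - (1 / ((m : ℚ) + 1)) * ∑ i, 1 / (r i : ℚ)) := by
  have hr1 : ∀ i, (1 : ℚ) < r i := fun i ↦ by exact_mod_cast hr i
  have hr0 : ∀ i, (0 : ℚ) < r i := fun i ↦ one_pos.trans (hr1 i)
  have hm8 : (m : ℚ) + 8 < 8 * g := by exact_mod_cast (by omega : m + 8 < 8 * g)
  have key := abstractSlope_castSucc_lt (Nat.one_le_iff_ne_zero.1 hm) (a := 2 * (g : ℚ) - 2)
    (x := fun i ↦ 1 / (r i : ℚ)) (by linarith)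
    (fun i ↦ (div_le_one (hr0 i)).2 (hr1 i).le) (one_div_pos.2 (hr0 _))
    ((div_lt_one (hr0 _)).2 (hr1 _))
  simpa only [abstractSlope, one_div_pow, Nat.cast_add, Nat.cast_one] using key

/-- For `g ≥ 2`, `1 ≤ m ≤ 4(g-1)` and integers `r₁,…,r_{m+1} ≥ 2`, the abstract slope
strictly increases when the `(m+1)`-st component is added. -/
theorem abstract_slope_strict_mono (g m : ℕ) (hg : 2 ≤ g) (hm : 1 ≤ m)
    (hm4 : m ≤ 4 * (g - 1)) (r : Fin (m + 1) → ℕ) (hr : ∀ i, 2 ≤ r i) :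
    2 + (1 - (1 / (m : ℚ)) * ∑ i : Fin m, 1 / (r i.castSucc : ℚ) ^ 2) /
        ((2 * (g : ℚ) - 2) / m + 1 - (1 / (m : ℚ)) * ∑ i : Fin m, 1 / (r i.castSucc : ℚ)) <
    2 + (1 - (1 / ((m : ℚ) + 1)) * ∑ i, 1 / (r i : ℚ) ^ 2) /
        ((2 * (g : ℚ) - 2) / ((m : ℚ) + 1) + 1 - (1 / ((m : ℚ) + 1)) * ∑ i, 1 / (r i : ℚ)) :=
  abstract_slope_strict_mono_general g m hm hm4 r hr
end
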